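/- arXiv:2402.04104 — 3 statements merged into one kernel-verified Lean document; each statement's English description precedes it below -/
import Mathlib

section
/- Let f : [0,1] → ℝ be continuous, concave, Lipschitz with constant L > 0, with f(0) = 0 = f(1). Let k, h > 0, α ∈ ℝ and Δ_L, Δ_R satisfy the CFL condition k·max(L, |α|) ≤ h/2 and h ≤ Δ_L ≤ 2h, h ≤ Δ_R ≤ 2h. Then the interface marching operators H^C_L(a,b,c,d) := (Δ_L b + h c − k(h₀(c,d,α) − h⁻(a,b)))/(Δ_L + h + αk) and H^B_R(a,b,c,d) := (Δ_R b + h c − k(h⁺(c,d) − h₀(a,b,α)))/(Δ_R + h − αk) are nondecreasing in each of the four arguments a, b, c, d ∈ [0,1]. -/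
/-- Godunov numerical flux for the flux `+f`. -/
noncomputable def hplus (f : ℝ → ℝ) (a b : ℝ) : ℝ :=
  if a ≤ b then sInf (f '' Set.Icc a b) else sSup (f '' Set.Icc b a)

/-- Godunov numerical flux for the flux `−f`. -/
noncomputable def hminus (f : ℝ → ℝ) (a b : ℝ) : ℝ :=
  if a ≤ b then sInf ((fun s => -f s) '' Set.Icc a b)
  else sSup ((fun s => -f s) '' Set.Icc b a)

/-- Godunov-type interface flux along the interface of slope `α`. -/
noncomputable def h0flux (f : ℝ → ℝ) (a b α : ℝ) : ℝ :=
  -max (α * b - f b) 0 + max (-α * a - f a) 0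

/-- Left interface marching operator (Case C). -/
noncomputable def HCL (f : ℝ → ℝ) (α k h ΔL a b c d : ℝ) : ℝ :=
  (ΔL * b + h * c - k * (h0flux f c d α - hminus f a b)) / (ΔL + h + α * k)

/-- Right interface marching operator (Case B). -/
noncomputable def HBR (f : ℝ → ℝ) (α k h ΔR a b c d : ℝ) : ℝ :=
  (ΔR * b + h * c - k * (hplus f c d - h0flux f a b α)) / (ΔR + h - α * k)

/-!
Each operator has the form `(Δ b + h c - k (F(c, d) - G(a, b))) / D`, where `F` and `G` are
monotone numerical fluxes (nondecreasing in the first, nonincreasing in the second argument and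
Lipschitz in both) with a common constant `M = |α| + L`. Monotonicity of the fluxes handles `a`
and `d`; in `b` and `c` the Lipschitz loss `k M` is absorbed by `Δ` and `h` thanks to the CFL
condition. For the Godunov fluxes this is the elementary behaviour of infima and suprema of a
Lipschitz function over moving intervals. For the interface flux it rests on concavity: since
`x ↦ β x - f x` is convex and nonpositive at `0`, its positive part is nondecreasing on `[0, 1]`.
-/

open Set NNReal

structure IsMonotoneFlux (F : ℝ → ℝ → ℝ) (I : Set ℝ) (M : ℝ) : Prop where
  mono_left : ∀ b ∈ I, MonotoneOn (F · b) I
  anti_right : ∀ a ∈ I, AntitoneOn (F a) I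
  le_add_left : ∀ b ∈ I, ∀ a ∈ I, ∀ a' ∈ I, a ≤ a' → F a' b ≤ F a b + M * (a' - a)
  le_add_right : ∀ a ∈ I, ∀ b ∈ I, ∀ b' ∈ I, b ≤ b' → F a b ≤ F a b' + M * (b' - b)

namespace IsMonotoneFlux

variable {F G : ℝ → ℝ → ℝ} {I : Set ℝ} {M : ℝ}

theorem mono_const {M' : ℝ} (hF : IsMonotoneFlux F I M) (hM : M ≤ M') :
    IsMonotoneFlux F I M' where
  mono_left := hF.mono_left
  anti_right := hF.anti_right
  le_add_left b hb a ha a' ha' haa := (hF.le_add_left b hb a ha a' ha' haa).trans (by gcongr)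
  le_add_right a ha b hb b' hb' hbb := (hF.le_add_right a ha b hb b' hb' hbb).trans (by gcongr)

theorem marching_le (hG : IsMonotoneFlux G I M) (hF : IsMonotoneFlux F I M)
    {Δ h k D : ℝ} (hk : 0 ≤ k) (hΔ : k * M ≤ Δ) (hh : k * M ≤ h) (hD : 0 ≤ D)
    {a a' b b' c c' d d' : ℝ} (ha : a ∈ I) (ha' : a' ∈ I) (hb : b ∈ I) (hb' : b' ∈ I)
    (hc : c ∈ I) (hc' : c' ∈ I) (hd : d ∈ I) (hd' : d' ∈ I)
    (haa : a ≤ a') (hbb : b ≤ b') (hcc : c ≤ c') (hdd : d ≤ d') :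
    (Δ * b + h * c - k * (F c d - G a b)) / D ≤
      (Δ * b' + h * c' - k * (F c' d' - G a' b')) / D := by
  have hG' : G a b ≤ G a' b' + M * (b' - b) :=
    (hG.mono_left b hb ha ha' haa).trans (hG.le_add_right a' ha' b hb b' hb' hbb)
  have hF' : F c' d' ≤ F c d + M * (c' - c) :=
    (hF.anti_right c' hc' hd hd' hdd).trans (hF.le_add_left d hd c hc c' hc' hcc)
  have hb_gain : k * M * (b' - b) ≤ Δ * (b' - b) := by gcongr
  have hc_gain : k * M * (c' - c) ≤ h * (c' - c) := by gcongr
  gcongr ?_ / _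
  nlinarith [mul_le_mul_of_nonneg_left hG' hk, mul_le_mul_of_nonneg_left hF' hk]

end IsMonotoneFlux

theorem sInf_image_le_sInf_image_add {g : ℝ → ℝ} {S T : Set ℝ} {δ : ℝ}
    (hT : BddBelow (g '' T)) (hS : S.Nonempty) (h : ∀ s ∈ S, ∃ t ∈ T, g t ≤ g s + δ) :
    sInf (g '' T) ≤ sInf (g '' S) + δ := by
  rw [← sub_le_iff_le_add]
  refine le_csInf (hS.image g) ?_
  rintro _ ⟨s, hs, rfl⟩
  obtain ⟨t, ht, hts⟩ := h s hs
  linarith [csInf_le hT (mem_image_of_mem g ht)]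

theorem sSup_image_le_sSup_image_add {g : ℝ → ℝ} {S T : Set ℝ} {δ : ℝ}
    (hS : BddAbove (g '' S)) (hT : T.Nonempty) (h : ∀ t ∈ T, ∃ s ∈ S, g t ≤ g s + δ) :
    sSup (g '' T) ≤ sSup (g '' S) + δ := by
  refine csSup_le (hT.image g) ?_
  rintro _ ⟨t, ht, rfl⟩
  obtain ⟨s, hs, hts⟩ := h t ht
  linarith [le_csSup hS (mem_image_of_mem g hs)]

theorem LipschitzOnWith.le_add_mul_of_abs_sub_le {g : ℝ → ℝ} {I : Set ℝ} {K : ℝ≥0}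
    (hg : LipschitzOnWith K g I) {s t δ : ℝ} (ht : t ∈ I) (hs : s ∈ I) (hts : |t - s| ≤ δ) :
    g t ≤ g s + K * δ := by
  have hdist := hg.dist_le_mul t ht s hs
  rw [Real.dist_eq, Real.dist_eq] at hdist
  nlinarith [le_abs_self (g t - g s), K.coe_nonneg]

theorem hplus_eq_neg_hplus_neg_swap (g : ℝ → ℝ) (a b : ℝ) :
    hplus g a b = -hplus (-g) b a := by
  have himage : ∀ S : Set ℝ, (-g) '' S = -(g '' S) := fun S => by
    rw [← image_neg_eq_neg, image_image]; rfl
  unfold hplus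
  rcases lt_trichotomy a b with hab | rfl | hab
  · rw [if_pos hab.le, if_neg hab.not_ge, himage, Real.sSup_neg, neg_neg]
  · simp
  · rw [if_neg hab.not_ge, if_pos hab.le, himage, Real.sInf_neg, neg_neg]

section Godunov

variable {g : ℝ → ℝ} {I : Set ℝ} {K : ℝ≥0}

theorem hplus_mono_left (hI : I.OrdConnected) (hg : LipschitzOnWith K g I) {b : ℝ}
    (hb : b ∈ I) : MonotoneOn (hplus g · b) I := by
  intro a ha a' ha' haa
  have hbelow : BddBelow (g '' Icc a b) :=
    isCompact_Icc.bddBelow_image (hg.continuousOn.mono (hI.out ha hb))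
  have habove : BddAbove (g '' Icc b a') :=
    isCompact_Icc.bddAbove_image (hg.continuousOn.mono (hI.out hb ha'))
  dsimp only [hplus]
  rcases le_or_gt a' b with h' | h'
  · rw [if_pos (haa.trans h'), if_pos h']
    exact csInf_le_csInf hbelow ((nonempty_Icc.2 h').image g)
      (image_mono (Icc_subset_Icc haa le_rfl))
  rw [if_neg h'.not_ge]
  rcases le_or_gt a b with h | h
  · rw [if_pos h]
    calc sInf (g '' Icc a b) ≤ g b := csInf_le hbelow ⟨b, ⟨h, le_rfl⟩, rfl⟩
      _ ≤ sSup (g '' Icc b a') := le_csSup habove ⟨b, ⟨le_rfl, h'.le⟩, rfl⟩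
  · rw [if_neg h.not_ge]
    exact csSup_le_csSup habove ((nonempty_Icc.2 h.le).image g)
      (image_mono (Icc_subset_Icc le_rfl haa))

theorem sInf_image_Icc_le_add (hI : I.OrdConnected) (hg : LipschitzOnWith K g I)
    {a a' b : ℝ} (ha : a ∈ I) (hb : b ∈ I) (haa : a ≤ a') (hab : a' ≤ b) :
    sInf (g '' Icc a' b) ≤ sInf (g '' Icc a b) + K * (a' - a) := by
  have hsub := hI.out ha hb
  refine sInf_image_le_sInf_image_add
    (isCompact_Icc.bddBelow_image (hg.continuousOn.mono ((Icc_subset_Icc haa le_rfl).trans hsub)))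
    (nonempty_Icc.2 (haa.trans hab)) fun s hs => ⟨max a' s, ⟨le_max_left _ _, max_le hab hs.2⟩, ?_⟩
  refine hg.le_add_mul_of_abs_sub_le (hsub ⟨haa.trans (le_max_left _ _), max_le hab hs.2⟩)
    (hsub hs) (abs_sub_le_iff.2 ⟨?_, ?_⟩)
  · exact sub_le_iff_le_add.2 (max_le (by linarith [hs.1]) (by linarith))
  · linarith [le_max_right a' s]

theorem sSup_image_Icc_le_add (hI : I.OrdConnected) (hg : LipschitzOnWith K g I)
    {a a' b : ℝ} (hb : b ∈ I) (ha' : a' ∈ I) (hba : b ≤ a) (haa : a ≤ a') :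
    sSup (g '' Icc b a') ≤ sSup (g '' Icc b a) + K * (a' - a) := by
  have hsub := hI.out hb ha'
  refine sSup_image_le_sSup_image_add
    (isCompact_Icc.bddAbove_image (hg.continuousOn.mono ((Icc_subset_Icc le_rfl haa).trans hsub)))
    (nonempty_Icc.2 (hba.trans haa)) fun t ht => ⟨min t a, ⟨le_min ht.1 hba, min_le_right _ _⟩, ?_⟩
  refine hg.le_add_mul_of_abs_sub_le (hsub ht)
    (hsub ⟨le_min ht.1 hba, (min_le_right _ _).trans haa⟩) (abs_sub_le_iff.2 ⟨?_, ?_⟩)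
  · exact sub_le_comm.1 (le_min (by linarith) (by linarith [ht.2]))
  · linarith [min_le_left t a]

theorem hplus_le_add_left (hI : I.OrdConnected) (hg : LipschitzOnWith K g I) {a a' b : ℝ}
    (ha : a ∈ I) (ha' : a' ∈ I) (hb : b ∈ I) (haa : a ≤ a') :
    hplus g a' b ≤ hplus g a b + K * (a' - a) := by
  rcases le_or_gt a' b with h' | h'
  · rw [hplus, hplus, if_pos (haa.trans h'), if_pos h']
    exact sInf_image_Icc_le_add hI hg ha hb haa h'
  rcases le_or_gt a b with h | h
  · -- the interval `[a, a']` straddles `b`: pass through the degenerate flux `hplus g b b = g b`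
    have hsup := sSup_image_Icc_le_add hI hg hb ha' le_rfl h'.le
    have hinf := sInf_image_Icc_le_add hI hg ha hb h le_rfl
    simp only [Icc_self, image_singleton, csSup_singleton, csInf_singleton] at hsup hinf
    rw [hplus, hplus, if_neg h'.not_ge, if_pos h]
    linarith
  · rw [hplus, hplus, if_neg h'.not_ge, if_neg h.not_ge]
    exact sSup_image_Icc_le_add hI hg hb ha' h.le haa

theorem isMonotoneFlux_hplus (hI : I.OrdConnected) (hg : LipschitzOnWith K g I) :
    IsMonotoneFlux (hplus g) I K where
  mono_left _ hb := hplus_mono_left hI hg hb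
  anti_right a ha b hb b' hb' hbb := by
    rw [hplus_eq_neg_hplus_neg_swap g a b', hplus_eq_neg_hplus_neg_swap g a b, neg_le_neg_iff]
    exact hplus_mono_left hI hg.neg ha hb hb' hbb
  le_add_left _ hb _ ha _ ha' haa := hplus_le_add_left hI hg ha ha' hb haa
  le_add_right a ha b hb b' hb' hbb := by
    rw [hplus_eq_neg_hplus_neg_swap g a b', hplus_eq_neg_hplus_neg_swap g a b]
    linarith [hplus_le_add_left hI hg.neg hb hb' ha hbb]

end Godunov

theorem ConvexOn.monotoneOn_max_zero {φ : ℝ → ℝ} {s : Set ℝ} (hφ : ConvexOn ℝ s φ) (h0 : 0 ∈ s)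
    (hφ0 : φ 0 ≤ 0) (hs : s ⊆ Ici 0) : MonotoneOn (fun x => max (φ x) 0) s := by
  intro x hx y hy hxy
  have hx0 : 0 ≤ x := hs hx
  have hseg : φ x ≤ max (φ 0) (φ y) :=
    hφ.le_on_segment h0 hy (by rw [segment_eq_Icc (hx0.trans hxy)]; exact ⟨hx0, hxy⟩)
  exact max_le (hseg.trans (max_le (hφ0.trans (le_max_right _ _)) (le_max_left _ _)))
    (le_max_right _ _)

theorem LipschitzOnWith.max_zero_le_add {φ : ℝ → ℝ} {s : Set ℝ} {K : ℝ≥0}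
    (hφ : LipschitzOnWith K φ s) {x y : ℝ} (hx : x ∈ s) (hy : y ∈ s) (hxy : x ≤ y) :
    max (φ y) 0 ≤ max (φ x) 0 + K * (y - x) := by
  have hdist := hφ.dist_le_mul y hy x hx
  rw [Real.dist_eq, Real.dist_eq, abs_of_nonneg (sub_nonneg.2 hxy)] at hdist
  linarith [abs_max_sub_max_le_abs (φ y) (φ x) 0, le_abs_self (max (φ y) 0 - max (φ x) 0)]

theorem isMonotoneFlux_h0flux {f : ℝ → ℝ} {s : Set ℝ} {K : ℝ≥0} (hconc : ConcaveOn ℝ s f)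
    (hf : LipschitzOnWith K f s) (h0 : 0 ∈ s) (hs : s ⊆ Ici 0) (hf0 : 0 ≤ f 0) (α : ℝ) :
    IsMonotoneFlux (fun a b => h0flux f a b α) s (|α| + K) := by
  have hmono (β : ℝ) : MonotoneOn (fun x => max (β * x - f x) 0) s :=
    (((LinearMap.mul ℝ ℝ β).convexOn hconc.1).sub hconc).monotoneOn_max_zero h0
      (by simpa using hf0) hs
  have hlip (β x : ℝ) (hx : x ∈ s) (y : ℝ) (hy : y ∈ s) (hxy : x ≤ y) :
      max (β * y - f y) 0 ≤ max (β * x - f x) 0 + (|β| + K) * (y - x) := by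
    have := ((lipschitzWith_smul β).lipschitzOnWith.sub hf).max_zero_le_add hx hy hxy
    rwa [NNReal.coe_add, coe_nnnorm, Real.norm_eq_abs] at this
  refine ⟨fun _ _ a ha a' ha' haa => ?_, fun _ _ b hb b' hb' hbb => ?_,
    fun _ _ a ha a' ha' haa => ?_, fun _ _ b hb b' hb' hbb => ?_⟩
  · have := hmono (-α) ha ha' haa
    simp only [h0flux] at this ⊢
    linarith
  · have := hmono α hb hb' hbb
    simp only [h0flux] at this ⊢
    linarith
  · have := hlip (-α) a ha a' ha' haa
    rw [abs_neg] at this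
    simp only [h0flux]
    linarith
  · have := hlip α b hb b' hb' hbb
    simp only [h0flux]
    linarith

theorem stmt_13_general
    (f : ℝ → ℝ)
    (hconc : ConcaveOn ℝ (Set.Icc 0 1) f)
    (L : ℝ) (hL : 0 < L)
    (hlip : ∀ x ∈ Set.Icc (0:ℝ) 1, ∀ y ∈ Set.Icc (0:ℝ) 1, |f x - f y| ≤ L * |x - y|)
    (hf0 : f 0 = 0)
    (k h α ΔL ΔR : ℝ) (hk : 0 < k)
    (hCFL : k * max L |α| ≤ h / 2)
    (hΔL : h ≤ ΔL ∧ ΔL ≤ 2 * h) (hΔR : h ≤ ΔR ∧ ΔR ≤ 2 * h) :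
    ∀ a a' b b' c c' d d' : ℝ,
      a ∈ Set.Icc (0:ℝ) 1 → a' ∈ Set.Icc (0:ℝ) 1 →
      b ∈ Set.Icc (0:ℝ) 1 → b' ∈ Set.Icc (0:ℝ) 1 →
      c ∈ Set.Icc (0:ℝ) 1 → c' ∈ Set.Icc (0:ℝ) 1 →
      d ∈ Set.Icc (0:ℝ) 1 → d' ∈ Set.Icc (0:ℝ) 1 →
      a ≤ a' → b ≤ b' → c ≤ c' → d ≤ d' →
      HCL f α k h ΔL a b c d ≤ HCL f α k h ΔL a' b' c' d' ∧
      HBR f α k h ΔR a b c d ≤ HBR f α k h ΔR a' b' c' d' := by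
  intro a a' b b' c c' d d' ha ha' hb hb' hc hc' hd hd' haa hbb hcc hdd
  have hKL : (L.toNNReal : ℝ) = L := Real.coe_toNNReal L hL.le
  have hf : LipschitzOnWith L.toNNReal f (Icc 0 1) := LipschitzOnWith.of_dist_le_mul
    fun x hx y hy => by simpa only [Real.dist_eq, hKL] using hlip x hx y hy
  have hLM : (L.toNNReal : ℝ) ≤ |α| + L := by rw [hKL]; linarith [abs_nonneg α]
  have hkM : k * (|α| + L) ≤ h := by
    nlinarith [mul_le_mul_of_nonneg_left (le_max_left L |α|) hk.le,
      mul_le_mul_of_nonneg_left (le_max_right L |α|) hk.le]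
  have hαk : |α * k| ≤ h := by
    rw [abs_mul, abs_of_pos hk]; nlinarith
  have hplus_flux := (isMonotoneFlux_hplus ordConnected_Icc hf).mono_const hLM
  have hminus_flux := (isMonotoneFlux_hplus ordConnected_Icc hf.neg).mono_const hLM
  have h0_flux := isMonotoneFlux_h0flux hconc hf ⟨le_rfl, zero_le_one⟩ (fun x hx => hx.1) hf0.ge α
  rw [hKL] at h0_flux
  exact ⟨hminus_flux.marching_le h0_flux hk.le (hkM.trans hΔL.1) hkM
      (by linarith [(abs_le.1 hαk).1]) ha ha' hb hb' hc hc' hd hd' haa hbb hcc hdd,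
    h0_flux.marching_le hplus_flux hk.le (hkM.trans hΔR.1) hkM
      (by linarith [(abs_le.1 hαk).2]) ha ha' hb hb' hc hc' hd hd' haa hbb hcc hdd⟩

/-- Under the CFL condition, the interface marching operators `H^C_L` and `H^B_R`
are nondecreasing in each of their four arguments. -/
theorem stmt_13
    (f : ℝ → ℝ)
    (hcont : ContinuousOn f (Set.Icc 0 1))
    (hconc : ConcaveOn ℝ (Set.Icc 0 1) f)
    (L : ℝ) (hL : 0 < L)
    (hlip : ∀ x ∈ Set.Icc (0:ℝ) 1, ∀ y ∈ Set.Icc (0:ℝ) 1, |f x - f y| ≤ L * |x - y|)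
    (hf0 : f 0 = 0) (hf1 : f 1 = 0)
    (k h α ΔL ΔR : ℝ) (hk : 0 < k) (hh : 0 < h)
    (hCFL : k * max L |α| ≤ h / 2)
    (hΔL : h ≤ ΔL ∧ ΔL ≤ 2 * h) (hΔR : h ≤ ΔR ∧ ΔR ≤ 2 * h) :
    ∀ a a' b b' c c' d d' : ℝ,
      a ∈ Set.Icc (0:ℝ) 1 → a' ∈ Set.Icc (0:ℝ) 1 →
      b ∈ Set.Icc (0:ℝ) 1 → b' ∈ Set.Icc (0:ℝ) 1 →
      c ∈ Set.Icc (0:ℝ) 1 → c' ∈ Set.Icc (0:ℝ) 1 →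
      d ∈ Set.Icc (0:ℝ) 1 → d' ∈ Set.Icc (0:ℝ) 1 →
      a ≤ a' → b ≤ b' → c ≤ c' → d ≤ d' →
      HCL f α k h ΔL a b c d ≤ HCL f α k h ΔL a' b' c' d' ∧
      HBR f α k h ΔR a b c d ≤ HBR f α k h ΔR a' b' c' d' :=
  stmt_13_general f hconc L hL hlip hf0 k h α ΔL ΔR hk hCFL hΔL hΔR
end

section
/- Let f : [0,1] → ℝ be continuous, concave, Lipschitz with constant L > 0, with f(0) = 0 = f(1). Let k, h > 0, α ∈ ℝ and Δ_L satisfy the CFL condition k·max(L, |α|) ≤ h/2 and h ≤ Δ_L ≤ 2h. Then for all a, b, c, κ ∈ [0,1]: (Δ_L + αk)·|H^{AB}_L(a,b,c) − κ| ≤ Δ_L·|b − κ| − k·[(h₀(b∨κ, c∨κ, α) − h₀(b∧κ, c∧κ, α)) − (h⁻(a∨κ, b∨κ) − h⁻(a∧κ, b∧κ))] + k·R_L(κ, α), where ∨ and ∧ denote max and min. (Discrete entropy inequality for the cell to the left of the interface, Case A.) -/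
/-- Left remainder term `R_L`. -/
noncomputable def RL (f : ℝ → ℝ) (b α : ℝ) : ℝ :=
  min (max (α * b + f b) 0) (2 * f b)

/-- Left interface marching operator (Cases A, B). -/
noncomputable def HABL (f : ℝ → ℝ) (α k ΔL a b c : ℝ) : ℝ :=
  (ΔL * b - k * (h0flux f b c α - hminus f a b)) / (ΔL + α * k)

open Set

theorem ConcaveOn.monotoneOn_Icc_of_isMaxOn {f : ℝ → ℝ} {a b σ : ℝ}
    (hf : ConcaveOn ℝ (Icc a b) f) (hσ : σ ∈ Icc a b) (hmax : IsMaxOn f (Icc a b) σ) :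
    MonotoneOn f (Icc a σ) := by
  intro x hx y hy hxy
  have hx' : x ∈ Icc a b := ⟨hx.1, hx.2.trans hσ.2⟩
  have := hf.ge_on_segment hx' hσ (by rw [segment_eq_Icc hx.2]; exact ⟨hxy, hy.2⟩)
  rwa [min_eq_left (hmax hx')] at this

theorem ConcaveOn.antitoneOn_Icc_of_isMaxOn {f : ℝ → ℝ} {a b σ : ℝ}
    (hf : ConcaveOn ℝ (Icc a b) f) (hσ : σ ∈ Icc a b) (hmax : IsMaxOn f (Icc a b) σ) :
    AntitoneOn f (Icc σ b) := by
  intro x hx y hy hxy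
  have hy' : y ∈ Icc a b := ⟨hσ.1.trans hy.1, hy.2⟩
  have := hf.ge_on_segment hσ hy' (by rw [segment_eq_Icc hy.1]; exact ⟨hx.1, hxy⟩)
  rwa [min_eq_right (hmax hy')] at this

/-- Concavity and `f 0 = 0` give `f x ≥ (x / y) f y`, so `β x - f x ≤ (x / y) (β y - f y)`. -/
theorem ConcaveOn.monotoneOn_max_mul_sub_zero {f : ℝ → ℝ} {s : Set ℝ} (hf : ConcaveOn ℝ s f)
    (h0 : 0 ∈ s) (hf0 : f 0 = 0) (β : ℝ) :
    MonotoneOn (fun x => max (β * x - f x) 0) (s ∩ Ici 0) := by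
  intro x hx y hy hxy
  rcases (hx.2.trans hxy).eq_or_lt with hy0 | hy0
  · obtain rfl : x = y := le_antisymm hxy (hy0 ▸ hx.2)
    exact le_rfl
  set t := x / y
  have ht0 : 0 ≤ t := div_nonneg hx.2 hy0.le
  have ht1 : t ≤ 1 := (div_le_one hy0).2 hxy
  have hty : t * y = x := div_mul_cancel₀ x hy0.ne'
  have hconc : t * f y ≤ f x := by
    simpa [hf0, hty] using hf.2 hy.1 h0 ht0 (sub_nonneg.2 ht1) (add_sub_cancel t 1)
  have hscale : t * (β * y - f y) ≤ max (β * y - f y) 0 :=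
    calc t * (β * y - f y) ≤ t * max (β * y - f y) 0 :=
          mul_le_mul_of_nonneg_left (le_max_left _ _) ht0
      _ ≤ max (β * y - f y) 0 := mul_le_of_le_one_left (le_max_right _ _) ht1
  refine max_le ?_ (le_max_right _ _)
  have hβ : β * x = t * (β * y) := by rw [← hty]; ring
  calc β * x - f x ≤ t * (β * y - f y) := by linarith
    _ ≤ max (β * y - f y) 0 := hscale

section Lipschitz

variable {f : ℝ → ℝ} {L σ y₁ y₂ : ℝ}

theorem abs_sub_le_of_lipschitz
    (hlip : ∀ x ∈ Icc (0:ℝ) 1, ∀ y ∈ Icc (0:ℝ) 1, |f x - f y| ≤ L * |x - y|)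
    {x y : ℝ} (hx : x ∈ Icc (0:ℝ) 1) (hy : y ∈ Icc (0:ℝ) 1) (hxy : x ≤ y) :
    |f y - f x| ≤ L * (y - x) := by
  simpa [abs_of_nonneg (sub_nonneg.2 hxy)] using hlip y hy x hx

theorem nonneg_of_lipschitz
    (hlip : ∀ x ∈ Icc (0:ℝ) 1, ∀ y ∈ Icc (0:ℝ) 1, |f x - f y| ≤ L * |x - y|) : 0 ≤ L := by
  simpa using (abs_nonneg _).trans
    (abs_sub_le_of_lipschitz hlip (left_mem_Icc.2 zero_le_one) (right_mem_Icc.2 zero_le_one)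
      zero_le_one)

theorem apply_inf_sub_apply_inf_le
    (hlip : ∀ x ∈ Icc (0:ℝ) 1, ∀ y ∈ Icc (0:ℝ) 1, |f x - f y| ≤ L * |x - y|)
    (hσ : σ ∈ Icc (0:ℝ) 1) (hy₁ : y₁ ∈ Icc (0:ℝ) 1) (hy₂ : y₂ ∈ Icc (0:ℝ) 1) (h : y₁ ≤ y₂) :
    f (y₂ ⊓ σ) - f (y₁ ⊓ σ) ≤ L * (y₂ - y₁) := by
  have hL := nonneg_of_lipschitz hlip
  rcases le_total y₁ σ with h₁ | h₁
  · rcases le_total y₂ σ with h₂ | h₂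
    · rw [inf_eq_left.2 h₁, inf_eq_left.2 h₂]
      exact le_of_abs_le (abs_sub_le_of_lipschitz hlip hy₁ hy₂ h)
    · rw [inf_eq_left.2 h₁, inf_eq_right.2 h₂]
      have := le_of_abs_le (abs_sub_le_of_lipschitz hlip hy₁ hσ h₁)
      nlinarith
  · rw [inf_eq_right.2 h₁, inf_eq_right.2 (h₁.trans h), sub_self]
    nlinarith

theorem apply_sub_apply_add_apply_inf_sub_apply_inf_le
    (hlip : ∀ x ∈ Icc (0:ℝ) 1, ∀ y ∈ Icc (0:ℝ) 1, |f x - f y| ≤ L * |x - y|)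
    (hσ : σ ∈ Icc (0:ℝ) 1) (hy₁ : y₁ ∈ Icc (0:ℝ) 1) (hy₂ : y₂ ∈ Icc (0:ℝ) 1) (h : y₁ ≤ y₂) :
    f y₁ - f y₂ + (f (y₂ ⊓ σ) - f (y₁ ⊓ σ)) ≤ L * (y₂ - y₁) := by
  have hL := nonneg_of_lipschitz hlip
  rcases le_total y₁ σ with h₁ | h₁
  · rcases le_total y₂ σ with h₂ | h₂
    · rw [inf_eq_left.2 h₁, inf_eq_left.2 h₂]
      nlinarith
    · rw [inf_eq_left.2 h₁, inf_eq_right.2 h₂]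
      have := neg_le_of_abs_le (abs_sub_le_of_lipschitz hlip hσ hy₂ h₂)
      nlinarith
  · rw [inf_eq_right.2 h₁, inf_eq_right.2 (h₁.trans h)]
    have := neg_le_of_abs_le (abs_sub_le_of_lipschitz hlip hy₁ hy₂ h)
    linarith

end Lipschitz

section Unimodal

variable {f : ℝ → ℝ} {σ a b : ℝ}

theorem apply_le_apply_of_unimodal (hσ : σ ∈ Icc (0:ℝ) 1) (hmono : MonotoneOn f (Icc 0 σ))
    (hanti : AntitoneOn f (Icc σ 1)) {u : ℝ} (hu : u ∈ Icc (0:ℝ) 1) : f u ≤ f σ := by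
  rcases le_total u σ with h | h
  · exact hmono ⟨hu.1, h⟩ ⟨hσ.1, le_rfl⟩ h
  · exact hanti ⟨le_rfl, hσ.2⟩ ⟨h, hu.2⟩ h

theorem apply_eq_min_apply_inf_apply_sup (hσ : σ ∈ Icc (0:ℝ) 1)
    (hmono : MonotoneOn f (Icc 0 σ)) (hanti : AntitoneOn f (Icc σ 1)) {u : ℝ}
    (hu : u ∈ Icc (0:ℝ) 1) : f u = min (f (u ⊓ σ)) (f (u ⊔ σ)) := by
  have hmax := apply_le_apply_of_unimodal hσ hmono hanti hu
  rcases le_total u σ with h | h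
  · rw [inf_eq_left.2 h, sup_eq_right.2 h, min_eq_left hmax]
  · rw [inf_eq_right.2 h, sup_eq_left.2 h, min_eq_right hmax]

theorem monotoneOn_apply_inf (hσ : σ ∈ Icc (0:ℝ) 1) (hmono : MonotoneOn f (Icc 0 σ)) :
    MonotoneOn (fun u => f (u ⊓ σ)) (Icc 0 1) := fun _ hu _ hv huv =>
  hmono ⟨le_inf hu.1 hσ.1, inf_le_right⟩ ⟨le_inf hv.1 hσ.1, inf_le_right⟩ (inf_le_inf_right σ huv)

theorem antitoneOn_apply_sup (hσ : σ ∈ Icc (0:ℝ) 1) (hanti : AntitoneOn f (Icc σ 1)) :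
    AntitoneOn (fun u => f (u ⊔ σ)) (Icc 0 1) := fun _ hu _ hv huv =>
  hanti ⟨le_sup_right, sup_le hu.2 hσ.2⟩ ⟨le_sup_right, sup_le hv.2 hσ.2⟩ (sup_le_sup_right huv σ)

/-- The Godunov flux of the convex flux `-f`, which is minimal at `σ`, in closed form. -/
theorem hminus_eq_neg_min (hσ : σ ∈ Icc (0:ℝ) 1) (hmono : MonotoneOn f (Icc 0 σ))
    (hanti : AntitoneOn f (Icc σ 1)) (ha : a ∈ Icc (0:ℝ) 1) (hb : b ∈ Icc (0:ℝ) 1) :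
    hminus f a b = -min (f (a ⊔ σ)) (f (b ⊓ σ)) := by
  have hsplit := fun {u} (hu : u ∈ Icc (0:ℝ) 1) =>
    apply_eq_min_apply_inf_apply_sup hσ hmono hanti hu
  have hup := monotoneOn_apply_inf hσ hmono
  have hdown := antitoneOn_apply_sup hσ hanti
  have hmax := fun {u} (hu : u ∈ Icc (0:ℝ) 1) => apply_le_apply_of_unimodal hσ hmono hanti hu
  unfold hminus
  split_ifs with hab
  · refine IsLeast.csInf_eq ⟨?_, ?_⟩
    · rcases le_total σ a with hσa | hσa
      · refine ⟨a, ⟨le_rfl, hab⟩, ?_⟩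
        rw [sup_eq_left.2 hσa, inf_eq_right.2 (hσa.trans hab), min_eq_left (hmax ha)]
      rcases le_total b σ with hbσ | hσb
      · refine ⟨b, ⟨hab, le_rfl⟩, ?_⟩
        rw [sup_eq_right.2 hσa, inf_eq_left.2 hbσ, min_eq_right (hmax hb)]
      · refine ⟨σ, ⟨hσa, hσb⟩, ?_⟩
        rw [sup_eq_right.2 hσa, inf_eq_right.2 hσb, min_self]
    · rintro _ ⟨s, hs, rfl⟩
      have hs' : s ∈ Icc (0:ℝ) 1 := ⟨ha.1.trans hs.1, hs.2.trans hb.2⟩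
      refine neg_le_neg (le_min ?_ ?_)
      · exact ((hsplit hs').trans_le (min_le_right _ _)).trans (hdown ha hs' hs.1)
      · exact ((hsplit hs').trans_le (min_le_left _ _)).trans (hup hs' hb hs.2)
  · have hba : b ≤ a := (not_le.1 hab).le
    have hmin : min (f a) (f b) = min (f (a ⊔ σ)) (f (b ⊓ σ)) := by
      have := hup hb ha hba
      have := hdown hb ha hba
      rw [hsplit ha, hsplit hb]
      order
    refine IsGreatest.csSup_eq ⟨?_, ?_⟩
    · rcases min_choice (f a) (f b) with h | h
      · exact ⟨a, ⟨hba, le_rfl⟩, by rw [← hmin, h]⟩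
      · exact ⟨b, ⟨le_rfl, hba⟩, by rw [← hmin, h]⟩
    · rintro _ ⟨s, hs, rfl⟩
      have hs' : s ∈ Icc (0:ℝ) 1 := ⟨hb.1.trans hs.1, hs.2.trans ha.2⟩
      refine neg_le_neg ?_
      rw [hsplit hs']
      exact le_min (min_le_of_right_le (hup hb hs' hs.1)) (min_le_of_left_le (hdown hs' ha hs.2))

theorem hminus_mono_left (hσ : σ ∈ Icc (0:ℝ) 1) (hmono : MonotoneOn f (Icc 0 σ))
    (hanti : AntitoneOn f (Icc σ 1)) {a₁ a₂ : ℝ} (ha₁ : a₁ ∈ Icc (0:ℝ) 1)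
    (ha₂ : a₂ ∈ Icc (0:ℝ) 1) (hb : b ∈ Icc (0:ℝ) 1) (h : a₁ ≤ a₂) :
    hminus f a₁ b ≤ hminus f a₂ b := by
  rw [hminus_eq_neg_min hσ hmono hanti ha₁ hb, hminus_eq_neg_min hσ hmono hanti ha₂ hb]
  exact neg_le_neg (min_le_min_right _ (antitoneOn_apply_sup hσ hanti ha₁ ha₂ h))

theorem hminus_sub_hminus_le (hσ : σ ∈ Icc (0:ℝ) 1) (hmono : MonotoneOn f (Icc 0 σ))
    (hanti : AntitoneOn f (Icc σ 1)) {b₁ b₂ : ℝ} (ha : a ∈ Icc (0:ℝ) 1)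
    (hb₁ : b₁ ∈ Icc (0:ℝ) 1) (hb₂ : b₂ ∈ Icc (0:ℝ) 1) (h : b₁ ≤ b₂) :
    hminus f a b₁ - hminus f a b₂ ≤ f (b₂ ⊓ σ) - f (b₁ ⊓ σ) := by
  rw [hminus_eq_neg_min hσ hmono hanti ha hb₁, hminus_eq_neg_min hσ hmono hanti ha hb₂]
  have hle := monotoneOn_apply_inf hσ hmono hb₁ hb₂ h
  rcases le_total (f (a ⊔ σ)) (f (b₁ ⊓ σ)) with h' | h'
  · rw [min_eq_left h', min_eq_left (h'.trans hle)]
    linarith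
  · rw [min_eq_right h']
    linarith [min_le_right (f (a ⊔ σ)) (f (b₂ ⊓ σ))]

end Unimodal

theorem hminus_self (f : ℝ → ℝ) (u : ℝ) : hminus f u u = -f u := by
  simp [hminus]

noncomputable def marchNum (f : ℝ → ℝ) (α k ΔL a b c : ℝ) : ℝ :=
  ΔL * b - k * (h0flux f b c α - hminus f a b)

section MarchNum

variable {f : ℝ → ℝ} {σ L α k ΔL : ℝ}

theorem HABL_eq_marchNum_div (a b c : ℝ) :
    HABL f α k ΔL a b c = marchNum f α k ΔL a b c / (ΔL + α * k) := rfl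

theorem marchNum_self {κ : ℝ} (hκ : 0 ≤ f κ) :
    marchNum f α k ΔL κ κ κ = (ΔL + α * k) * κ - k * RL f κ α := by
  have hflux : max (α * κ - f κ) 0 - max (-α * κ - f κ) 0 - f κ = α * κ - RL f κ α := by
    simp only [RL, max_def, min_def]
    split_ifs <;> linarith
  simp only [marchNum, h0flux, hminus_self]
  linear_combination k * hflux

theorem marchNum_mono_left (hσ : σ ∈ Icc (0:ℝ) 1) (hmono : MonotoneOn f (Icc 0 σ))
    (hanti : AntitoneOn f (Icc σ 1)) (hk : 0 ≤ k) {a₁ a₂ b : ℝ} (c : ℝ)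
    (ha₁ : a₁ ∈ Icc (0:ℝ) 1) (ha₂ : a₂ ∈ Icc (0:ℝ) 1) (hb : b ∈ Icc (0:ℝ) 1) (h : a₁ ≤ a₂) :
    marchNum f α k ΔL a₁ b c ≤ marchNum f α k ΔL a₂ b c := by
  have := mul_le_mul_of_nonneg_left (hminus_mono_left hσ hmono hanti ha₁ ha₂ hb h) hk
  simp only [marchNum]
  linarith

theorem marchNum_mono_right (hf : ConcaveOn ℝ (Icc 0 1) f) (hf0 : f 0 = 0) (hk : 0 ≤ k)
    (a b : ℝ) {c₁ c₂ : ℝ} (hc₁ : c₁ ∈ Icc (0:ℝ) 1) (hc₂ : c₂ ∈ Icc (0:ℝ) 1) (h : c₁ ≤ c₂) :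
    marchNum f α k ΔL a b c₁ ≤ marchNum f α k ΔL a b c₂ := by
  have := mul_le_mul_of_nonneg_left (hf.monotoneOn_max_mul_sub_zero
    (left_mem_Icc.2 zero_le_one) hf0 α ⟨hc₁, hc₁.1⟩ ⟨hc₂, hc₂.1⟩ h) hk
  simp only [marchNum, h0flux]
  linarith

theorem marchNum_mono_mid (hσ : σ ∈ Icc (0:ℝ) 1) (hmono : MonotoneOn f (Icc 0 σ))
    (hanti : AntitoneOn f (Icc σ 1))
    (hlip : ∀ x ∈ Icc (0:ℝ) 1, ∀ y ∈ Icc (0:ℝ) 1, |f x - f y| ≤ L * |x - y|)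
    (hk : 0 ≤ k) (hCFL : k * (|α| + L) ≤ ΔL) {a b₁ b₂ : ℝ} (c : ℝ) (ha : a ∈ Icc (0:ℝ) 1)
    (hb₁ : b₁ ∈ Icc (0:ℝ) 1) (hb₂ : b₂ ∈ Icc (0:ℝ) 1) (h : b₁ ≤ b₂) :
    marchNum f α k ΔL a b₁ c ≤ marchNum f α k ΔL a b₂ c := by
  have hδ : 0 ≤ b₂ - b₁ := sub_nonneg.2 h
  have hinflow : max (-α * b₂ - f b₂) 0 - max (-α * b₁ - f b₁) 0
      ≤ max (-α * b₂ - f b₂ - (-α * b₁ - f b₁)) 0 := by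
    simpa using max_sub_max_le_max (-α * b₂ - f b₂) 0 (-α * b₁ - f b₁) 0
  have hgodunov : hminus f a b₁ - hminus f a b₂ ≤ f (b₂ ⊓ σ) - f (b₁ ⊓ σ) :=
    hminus_sub_hminus_le hσ hmono hanti ha hb₁ hb₂ h
  have hrise := apply_inf_sub_apply_inf_le hlip hσ hb₁ hb₂ h
  have hvar := apply_sub_apply_add_apply_inf_sub_apply_inf_le hlip hσ hb₁ hb₂ h
  have hα := mul_le_mul_of_nonneg_right (neg_le_abs α) hδ
  have hαδ := mul_nonneg (abs_nonneg α) hδ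
  have hdrop : max (-α * b₂ - f b₂) 0 - max (-α * b₁ - f b₁) 0
      + (hminus f a b₁ - hminus f a b₂) ≤ (|α| + L) * (b₂ - b₁) := by
    rcases max_choice (-α * b₂ - f b₂ - (-α * b₁ - f b₁)) 0 with hm | hm <;>
      rw [hm] at hinflow <;> linarith
  have := mul_le_mul_of_nonneg_left hdrop hk
  have := mul_le_mul_of_nonneg_right hCFL hδ
  simp only [marchNum, h0flux]
  linarith

theorem marchNum_monotoneOn (hcont : ContinuousOn f (Icc 0 1)) (hf : ConcaveOn ℝ (Icc 0 1) f)
    (hf0 : f 0 = 0) (hlip : ∀ x ∈ Icc (0:ℝ) 1, ∀ y ∈ Icc (0:ℝ) 1, |f x - f y| ≤ L * |x - y|)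
    (hk : 0 ≤ k) (hCFL : k * (|α| + L) ≤ ΔL) :
    MonotoneOn (fun p : ℝ × ℝ × ℝ => marchNum f α k ΔL p.1 p.2.1 p.2.2) (Icc 0 1) := by
  obtain ⟨σ, hσ, hmax⟩ := isCompact_Icc.exists_isMaxOn (nonempty_Icc.2 zero_le_one) hcont
  have hmono := hf.monotoneOn_Icc_of_isMaxOn hσ hmax
  have hanti := hf.antitoneOn_Icc_of_isMaxOn hσ hmax
  rintro ⟨a₁, b₁, c₁⟩ ⟨⟨ha₁, hb₁, hc₁⟩, ⟨ha₁', hb₁', hc₁'⟩⟩ ⟨a₂, b₂, c₂⟩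
    ⟨⟨ha₂, hb₂, hc₂⟩, ⟨ha₂', hb₂', hc₂'⟩⟩ ⟨ha, hb, hc⟩
  calc marchNum f α k ΔL a₁ b₁ c₁
      ≤ marchNum f α k ΔL a₂ b₁ c₁ :=
        marchNum_mono_left hσ hmono hanti hk c₁ ⟨ha₁, ha₁'⟩ ⟨ha₂, ha₂'⟩ ⟨hb₁, hb₁'⟩ ha
    _ ≤ marchNum f α k ΔL a₂ b₂ c₁ :=
        marchNum_mono_mid hσ hmono hanti hlip hk hCFL c₁ ⟨ha₂, ha₂'⟩ ⟨hb₁, hb₁'⟩ ⟨hb₂, hb₂'⟩ hb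
    _ ≤ marchNum f α k ΔL a₂ b₂ c₂ :=
        marchNum_mono_right hf hf0 hk a₂ b₂ ⟨hc₁, hc₁'⟩ ⟨hc₂, hc₂'⟩ hc

end MarchNum

/-- Crandall–Majda: a monotone scheme satisfies the discrete entropy inequality at every
constant state `κ` that it reproduces up to the defect `r`. -/
theorem abs_sub_le_of_monotoneOn_Icc {β : Type*} [Lattice β] {l m : β} {N : β → ℝ}
    (hN : MonotoneOn N (Icc l m)) {u κ : β} (hu : u ∈ Icc l m) (hκ : κ ∈ Icc l m) {r : ℝ}
    (hr : 0 ≤ r) : |N u - (N κ + r)| ≤ N (u ⊔ κ) - N (u ⊓ κ) + r := by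
  have hsup : u ⊔ κ ∈ Icc l m := ⟨le_sup_of_le_left hu.1, sup_le hu.2 hκ.2⟩
  have hinf : u ⊓ κ ∈ Icc l m := ⟨le_inf hu.1 hκ.1, inf_le_of_left_le hu.2⟩
  have := hN hu hsup le_sup_left
  have := hN hκ hsup le_sup_right
  have := hN hinf hu inf_le_left
  have := hN hinf hκ inf_le_right
  exact abs_le.2 ⟨by linarith, by linarith⟩

theorem stmt_18_general
    (f : ℝ → ℝ)
    (hcont : ContinuousOn f (Set.Icc 0 1))
    (hconc : ConcaveOn ℝ (Set.Icc 0 1) f)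
    (L : ℝ)
    (hlip : ∀ x ∈ Set.Icc (0:ℝ) 1, ∀ y ∈ Set.Icc (0:ℝ) 1, |f x - f y| ≤ L * |x - y|)
    (hf0 : f 0 = 0) (hf1 : f 1 = 0)
    (k h α ΔL : ℝ) (hk : 0 < k) (hh : 0 < h)
    (hCFL : k * max L |α| ≤ h / 2)
    (hΔL : h ≤ ΔL ∧ ΔL ≤ 2 * h) :
    ∀ a b c κ : ℝ, a ∈ Set.Icc (0:ℝ) 1 → b ∈ Set.Icc (0:ℝ) 1 →
      c ∈ Set.Icc (0:ℝ) 1 → κ ∈ Set.Icc (0:ℝ) 1 →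
      (ΔL + α * k) * |HABL f α k ΔL a b c - κ| ≤ ΔL * |b - κ| -
        k * ((h0flux f (b ⊔ κ) (c ⊔ κ) α - h0flux f (b ⊓ κ) (c ⊓ κ) α) -
             (hminus f (a ⊔ κ) (b ⊔ κ) - hminus f (a ⊓ κ) (b ⊓ κ))) +
        k * RL f κ α := by
  intro a b c κ ha hb hc hκ
  have hkL := (mul_le_mul_of_nonneg_left (le_max_left L |α|) hk.le).trans hCFL
  have hkα := (mul_le_mul_of_nonneg_left (le_max_right L |α|) hk.le).trans hCFL
  have hD : 0 < ΔL + α * k := by nlinarith [neg_abs_le α]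
  have hfκ : 0 ≤ f κ := by
    simpa [hf0, hf1] using hconc.ge_on_segment (left_mem_Icc.2 zero_le_one)
      (right_mem_Icc.2 zero_le_one) (by rwa [segment_eq_Icc zero_le_one])
  have hRL : 0 ≤ k * RL f κ α := mul_nonneg hk.le (le_min (le_max_right _ _) (by linarith))
  have key := abs_sub_le_of_monotoneOn_Icc
    (marchNum_monotoneOn hcont hconc hf0 hlip hk.le (by linarith [hΔL.1] : k * (|α| + L) ≤ ΔL))
    (u := (a, b, c)) (κ := (κ, κ, κ)) ⟨⟨ha.1, hb.1, hc.1⟩, ⟨ha.2, hb.2, hc.2⟩⟩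
    ⟨⟨hκ.1, hκ.1, hκ.1⟩, ⟨hκ.2, hκ.2, hκ.2⟩⟩ hRL
  simp only [Prod.mk_sup_mk, Prod.mk_inf_mk] at key
  rw [marchNum_self hfκ, sub_add_cancel] at key
  calc (ΔL + α * k) * |HABL f α k ΔL a b c - κ|
      = |marchNum f α k ΔL a b c - (ΔL + α * k) * κ| := by
        rw [HABL_eq_marchNum_div, ← abs_of_pos hD, ← abs_mul, abs_of_pos hD, mul_sub,
          mul_div_cancel₀ _ hD.ne']
    _ ≤ _ := key
    _ = _ := by
        rw [← max_sub_min_eq_abs']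
        simp only [marchNum]
        ring

/-- Discrete entropy inequality for the cell to the left of the interface (Case A). -/
theorem stmt_18
    (f : ℝ → ℝ)
    (hcont : ContinuousOn f (Set.Icc 0 1))
    (hconc : ConcaveOn ℝ (Set.Icc 0 1) f)
    (L : ℝ) (hL : 0 < L)
    (hlip : ∀ x ∈ Set.Icc (0:ℝ) 1, ∀ y ∈ Set.Icc (0:ℝ) 1, |f x - f y| ≤ L * |x - y|)
    (hf0 : f 0 = 0) (hf1 : f 1 = 0)
    (k h α ΔL : ℝ) (hk : 0 < k) (hh : 0 < h)
    (hCFL : k * max L |α| ≤ h / 2)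
    (hΔL : h ≤ ΔL ∧ ΔL ≤ 2 * h) :
    ∀ a b c κ : ℝ, a ∈ Set.Icc (0:ℝ) 1 → b ∈ Set.Icc (0:ℝ) 1 →
      c ∈ Set.Icc (0:ℝ) 1 → κ ∈ Set.Icc (0:ℝ) 1 →
      (ΔL + α * k) * |HABL f α k ΔL a b c - κ| ≤ ΔL * |b - κ| -
        k * ((h0flux f (b ⊔ κ) (c ⊔ κ) α - h0flux f (b ⊓ κ) (c ⊓ κ) α) -
             (hminus f (a ⊔ κ) (b ⊔ κ) - hminus f (a ⊓ κ) (b ⊓ κ))) +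
        k * RL f κ α :=
  stmt_18_general f hcont hconc L hlip hf0 hf1 k h α ΔL hk hh hCFL hΔL
end

section
/- Let f : [0,1] → ℝ be continuous, concave, Lipschitz with constant L > 0, with f(0) = 0 = f(1). Let k, h > 0, α ∈ ℝ and Δ_R satisfy the CFL condition k·max(L, |α|) ≤ h/2 and h ≤ Δ_R ≤ 2h. Then for all a, b, c, κ ∈ [0,1]: (Δ_R − αk)·|H^{AC}_R(a,b,c) − κ| ≤ Δ_R·|b − κ| − k·[(h⁺(b∨κ, c∨κ) − h⁺(b∧κ, c∧κ)) − (h₀(a∨κ, b∨κ, α) − h₀(a∧κ, b∧κ, α))] + k·R_R(κ, α), where ∨ and ∧ denote max and min. (Discrete entropy inequality for the cell to the right of the interface, Case A.) -/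
/-- Right remainder term `R_R`. -/
noncomputable def RR (f : ℝ → ℝ) (b α : ℝ) : ℝ :=
  2 * f b - RL f b α

/-- Right interface marching operator (Cases A, C). -/
noncomputable def HACR (f : ℝ → ℝ) (α k ΔR a b c : ℝ) : ℝ :=
  (ΔR * b - k * (hplus f b c - h0flux f a b α)) / (ΔR - α * k)

open Set

theorem hplus_self (f : ℝ → ℝ) (x : ℝ) : hplus f x x = f x := by
  rw [hplus, if_pos le_rfl, Icc_self, image_singleton, csInf_singleton]

theorem apply_min_add_apply_max (f : ℝ → ℝ) (x y : ℝ) :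
    f (min x y) + f (max x y) = f x + f y := by
  rcases le_total x y with h | h <;> simp [h, add_comm]

theorem ConcaveOn.mul_le_map_mul {S : Set ℝ} {f : ℝ → ℝ} (hf : ConcaveOn ℝ S f)
    (h0 : (0 : ℝ) ∈ S) (hf0 : f 0 = 0) {t x : ℝ} (ht : t ∈ Icc (0 : ℝ) 1) (hx : x ∈ S) :
    t * f x ≤ f (t * x) := by
  simpa [hf0] using hf.2 h0 hx (sub_nonneg.2 ht.2) ht.1 (sub_add_cancel 1 t)

section Unimodal

variable {S : Set ℝ} {f : ℝ → ℝ} {s : ℝ}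

theorem ConcaveOn.monotoneOn_of_isMaxOn (hf : ConcaveOn ℝ S f) (hs : s ∈ S)
    (hmax : IsMaxOn f S s) : MonotoneOn f (S ∩ Iic s) := fun _ hx _ hy hxy =>
  min_eq_left (isMaxOn_iff.1 hmax _ hx.1) ▸ hf.min_le_of_mem_Icc hx.1 hs ⟨hxy, hy.2⟩

theorem ConcaveOn.antitoneOn_of_isMaxOn (hf : ConcaveOn ℝ S f) (hs : s ∈ S)
    (hmax : IsMaxOn f S s) : AntitoneOn f (S ∩ Ici s) := fun _ hx _ hy hxy =>
  min_eq_right (isMaxOn_iff.1 hmax _ hy.1) ▸ hf.min_le_of_mem_Icc hs hy.1 ⟨hx.2, hxy⟩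

theorem ConcaveOn.hplus_of_le (hf : ConcaveOn ℝ S f) {b c : ℝ} (hb : b ∈ S) (hc : c ∈ S)
    (hbc : b ≤ c) : hplus f b c = min (f b) (f c) := by
  rw [hplus, if_pos hbc]
  refine IsLeast.csInf_eq ⟨?_, ?_⟩
  · rcases min_choice (f b) (f c) with h | h <;> rw [h]
    exacts [mem_image_of_mem f (left_mem_Icc.2 hbc), mem_image_of_mem f (right_mem_Icc.2 hbc)]
  · rintro _ ⟨x, hx, rfl⟩
    exact hf.min_le_of_mem_Icc hb hc hx

theorem ConcaveOn.hplus_of_lt (hf : ConcaveOn ℝ S f) (hs : s ∈ S) (hmax : IsMaxOn f S s)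
    {b c : ℝ} (hb : b ∈ S) (hc : c ∈ S) (hcb : c < b) :
    hplus f b c = f (max c (min s b)) := by
  rw [hplus, if_neg hcb.not_ge]
  have hbS : Icc c b ⊆ S := hf.1.ordConnected.out hc hb
  set m := max c (min s b)
  have hm : m ∈ Icc c b := ⟨le_max_left _ _, max_le hcb.le (min_le_right _ _)⟩
  refine IsGreatest.csSup_eq ⟨mem_image_of_mem f hm, ?_⟩
  rintro _ ⟨x, hx, rfl⟩
  rcases le_total x s with hxs | hsx
  · refine hf.monotoneOn_of_isMaxOn hs hmax ⟨hbS hx, hxs⟩ ⟨hbS hm, ?_⟩ ?_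
    · exact max_le (hx.1.trans hxs) (min_le_left _ _)
    · exact (le_min hxs hx.2).trans (le_max_right _ _)
  · refine hf.antitoneOn_of_isMaxOn hs hmax ⟨hbS hm, ?_⟩ ⟨hbS hx, hsx⟩ ?_
    · exact (le_min le_rfl (hsx.trans hx.2)).trans (le_max_right _ _)
    · exact max_le hx.1 ((min_le_left _ _).trans hsx)

theorem ConcaveOn.hplus_eq_min (hf : ConcaveOn ℝ S f) (hs : s ∈ S) (hmax : IsMaxOn f S s)
    {b c : ℝ} (hb : b ∈ S) (hc : c ∈ S) :
    hplus f b c = min (f (min b s)) (f (max c s)) := by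
  have mono := hf.monotoneOn_of_isMaxOn hs hmax
  have anti := hf.antitoneOn_of_isMaxOn hs hmax
  have le_max : ∀ x ∈ S, f x ≤ f s := isMaxOn_iff.1 hmax
  rcases le_or_gt b c with hbc | hcb
  · rw [hf.hplus_of_le hb hc hbc]
    rcases le_total c s with hcs | hsc
    · have hfbc := mono ⟨hb, hbc.trans hcs⟩ ⟨hc, hcs⟩ hbc
      rw [min_eq_left (hbc.trans hcs), max_eq_right hcs, min_eq_left hfbc,
        min_eq_left (hfbc.trans (le_max c hc))]
    rcases le_total b s with hbs | hsb
    · rw [min_eq_left hbs, max_eq_left hsc]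
    · have hfcb := anti ⟨hb, hsb⟩ ⟨hc, hsc⟩ hbc
      rw [min_eq_right hsb, max_eq_left hsc, min_eq_right hfcb,
        min_eq_right (hfcb.trans (le_max b hb))]
  · rw [hf.hplus_of_lt hs hmax hb hc hcb]
    rcases le_total s c with hsc | hcs
    · rw [min_eq_left (hsc.trans hcb.le), max_eq_left hsc, min_eq_right (hsc.trans hcb.le),
        min_eq_right (le_max c hc)]
    rcases le_total s b with hsb | hbs
    · rw [min_eq_left hsb, max_eq_right hcs, min_eq_right hsb, min_self]
    · rw [min_eq_right hbs, max_eq_right hcb.le, min_eq_left hbs, max_eq_right hcs,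
        min_eq_left (le_max b hb)]

theorem ConcaveOn.hplus_antitoneOn (hf : ConcaveOn ℝ S f) (hs : s ∈ S) (hmax : IsMaxOn f S s)
    {b : ℝ} (hb : b ∈ S) : AntitoneOn (hplus f b) S := fun c₁ hc₁ c₂ hc₂ hc => by
  rw [hf.hplus_eq_min hs hmax hb hc₁, hf.hplus_eq_min hs hmax hb hc₂]
  refine min_le_min_left _ (hf.antitoneOn_of_isMaxOn hs hmax ⟨?_, ?_⟩ ⟨?_, ?_⟩ ?_) <;>
    grind [max_choice]

theorem ConcaveOn.hplus_add_max_sub_le {L : ℝ} (hf : ConcaveOn ℝ S f) (hs : s ∈ S)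
    (hmax : IsMaxOn f S s) (hlip : ∀ x ∈ S, ∀ y ∈ S, |f x - f y| ≤ L * |x - y|) (hL : 0 ≤ L) (α : ℝ)
    {b₁ b₂ c : ℝ} (hb₁ : b₁ ∈ S) (hb₂ : b₂ ∈ S) (hc : c ∈ S) (hb : b₁ ≤ b₂) :
    hplus f b₂ c + max (α * b₂ - f b₂) 0 - (hplus f b₁ c + max (α * b₁ - f b₁) 0) ≤
      (L + |α|) * (b₂ - b₁) := by
  have min_mem : ∀ x ∈ S, min x s ∈ S := fun x hx ↦ by
    rcases min_choice x s with h | h <;> rw [h] <;> assumption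
  have max_mem : ∀ x ∈ S, max x s ∈ S := fun x hx ↦ by
    rcases max_choice x s with h | h <;> rw [h] <;> assumption
  have hU : f (min b₂ s) - f (min b₁ s) ≤ L * (b₂ - b₁) := calc
    _ ≤ L * |min b₂ s - min b₁ s| :=
      (le_abs_self _).trans (hlip _ (min_mem _ hb₂) _ (min_mem _ hb₁))
    _ ≤ L * (b₂ - b₁) := by
      gcongr
      refine (abs_min_sub_min_le_max b₂ s b₁ s).trans_eq ?_
      rw [sub_self, abs_zero, max_eq_left (abs_nonneg _), abs_of_nonneg (sub_nonneg.2 hb)]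
  -- by `apply_min_add_apply_max`, this bounds `f (min b₂ s) - f (min b₁ s) - (f b₂ - f b₁)`,
  -- which is what remains when the outflow term is active
  have hV : f (max b₁ s) - f (max b₂ s) ≤ L * (b₂ - b₁) := calc
    _ ≤ L * |max b₁ s - max b₂ s| :=
      (le_abs_self _).trans (hlip _ (max_mem _ hb₁) _ (max_mem _ hb₂))
    _ ≤ L * (b₂ - b₁) := by
      gcongr
      refine (abs_max_sub_max_le_abs b₁ b₂ s).trans_eq ?_
      rw [abs_sub_comm, abs_of_nonneg (sub_nonneg.2 hb)]
  have hflux : hplus f b₂ c - hplus f b₁ c ≤ f (min b₂ s) - f (min b₁ s) := by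
    rw [hf.hplus_eq_min hs hmax hb₂ hc, hf.hplus_eq_min hs hmax hb₁ hc]
    have hmono : f (min b₁ s) ≤ f (min b₂ s) :=
      hf.monotoneOn_of_isMaxOn hs hmax ⟨min_mem _ hb₁, min_le_right b₁ s⟩
        ⟨min_mem _ hb₂, min_le_right b₂ s⟩ (min_le_min_right s hb)
    generalize f (min b₁ s) = X₁, f (min b₂ s) = X₂ at hmono ⊢
    simp only [min_def]
    split_ifs <;> linarith
  have hout := max_sub_max_le_max (α * b₂ - f b₂) 0 (α * b₁ - f b₁) 0
  rw [sub_zero] at hout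
  have hα : α * (b₂ - b₁) ≤ |α| * (b₂ - b₁) :=
    mul_le_mul_of_nonneg_right (le_abs_self α) (sub_nonneg.2 hb)
  have hα₀ : 0 ≤ |α| * (b₂ - b₁) := mul_nonneg (abs_nonneg α) (sub_nonneg.2 hb)
  have hsplit₁ := apply_min_add_apply_max f b₁ s
  have hsplit₂ := apply_min_add_apply_max f b₂ s
  have houtflow : max (α * b₂ - f b₂ - (α * b₁ - f b₁)) 0 ≤
      (L + |α|) * (b₂ - b₁) - (f (min b₂ s) - f (min b₁ s)) :=
    max_le (by linarith) (by linarith)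
  linarith

end Unimodal

theorem ConcaveOn.monotoneOn_max_neg_mul_sub {f : ℝ → ℝ} (hf : ConcaveOn ℝ (Icc 0 1) f)
    (hf0 : f 0 = 0) (α : ℝ) : MonotoneOn (fun a ↦ max (-α * a - f a) 0) (Icc 0 1) := by
  intro a₁ ha₁ a₂ ha₂ ha
  rcases (ha₁.1.trans ha).eq_or_lt with h0 | hpos
  · rw [le_antisymm (ha.trans h0.ge) ha₁.1, ← h0]
  set t := a₁ / a₂
  have ht : t ∈ Icc (0 : ℝ) 1 := ⟨div_nonneg ha₁.1 hpos.le, div_le_one_of_le₀ ha hpos.le⟩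
  have hta : t * a₂ = a₁ := div_mul_cancel₀ a₁ hpos.ne'
  have hconc := hf.mul_le_map_mul (left_mem_Icc.2 zero_le_one) hf0 ht ha₂
  refine max_le ?_ (le_max_right _ _)
  calc -α * a₁ - f a₁ = t * (-α * a₂) - f (t * a₂) := by rw [← hta]; ring
    _ ≤ t * (-α * a₂ - f a₂) := by linarith
    _ ≤ t * max (-α * a₂ - f a₂) 0 := mul_le_mul_of_nonneg_left (le_max_left _ _) ht.1
    _ ≤ max (-α * a₂ - f a₂) 0 := mul_le_of_le_one_left (le_max_right _ _) ht.2

noncomputable def numHACR (f : ℝ → ℝ) (α k ΔR a b c : ℝ) : ℝ :=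
  ΔR * b - k * (hplus f b c - h0flux f a b α)

theorem HACR_eq_numHACR_div (f : ℝ → ℝ) (α k ΔR a b c : ℝ) :
    HACR f α k ΔR a b c = numHACR f α k ΔR a b c / (ΔR - α * k) := rfl

theorem numHACR_mono {f : ℝ → ℝ} {L α k ΔR : ℝ} (hcont : ContinuousOn f (Icc 0 1))
    (hconc : ConcaveOn ℝ (Icc 0 1) f)
    (hlip : ∀ x ∈ Icc (0 : ℝ) 1, ∀ y ∈ Icc (0 : ℝ) 1, |f x - f y| ≤ L * |x - y|)
    (hL : 0 ≤ L) (hf0 : f 0 = 0) (hk : 0 ≤ k) (hCFL : k * (L + |α|) ≤ ΔR)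
    {a₁ b₁ c₁ a₂ b₂ c₂ : ℝ} (ha₁ : a₁ ∈ Icc (0 : ℝ) 1) (hb₁ : b₁ ∈ Icc (0 : ℝ) 1)
    (hc₁ : c₁ ∈ Icc (0 : ℝ) 1) (ha₂ : a₂ ∈ Icc (0 : ℝ) 1) (hb₂ : b₂ ∈ Icc (0 : ℝ) 1)
    (hc₂ : c₂ ∈ Icc (0 : ℝ) 1) (ha : a₁ ≤ a₂) (hb : b₁ ≤ b₂) (hc : c₁ ≤ c₂) :
    numHACR f α k ΔR a₁ b₁ c₁ ≤ numHACR f α k ΔR a₂ b₂ c₂ := by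
  obtain ⟨s, hs, hmax⟩ := isCompact_Icc.exists_isMaxOn (nonempty_Icc.2 zero_le_one) hcont
  have hA := hconc.monotoneOn_max_neg_mul_sub hf0 α ha₁ ha₂ ha
  have hB := hconc.hplus_add_max_sub_le hs hmax hlip hL α hb₁ hb₂ hc₁ hb
  have hC := hconc.hplus_antitoneOn hs hmax hb₂ hc₁ hc₂ hc
  have hkB := calc
    k * (hplus f b₂ c₁ + max (α * b₂ - f b₂) 0 - (hplus f b₁ c₁ + max (α * b₁ - f b₁) 0))
      ≤ k * ((L + |α|) * (b₂ - b₁)) := mul_le_mul_of_nonneg_left hB hk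
    _ ≤ ΔR * (b₂ - b₁) := by
      rw [← mul_assoc]; exact mul_le_mul_of_nonneg_right hCFL (sub_nonneg.2 hb)
  have hkA := mul_le_mul_of_nonneg_left hA hk
  have hkC := mul_le_mul_of_nonneg_left hC hk
  simp only [numHACR, h0flux]
  linarith

theorem abs_sub_add_h0flux_self_le_RR {f : ℝ → ℝ} {κ : ℝ} (hκ : 0 ≤ f κ) (α : ℝ) :
    |α * κ - f κ + h0flux f κ κ α| ≤ RR f κ α := by
  simp only [h0flux, RR, RL, abs_le, neg_mul, max_def, min_def]
  split_ifs <;> constructor <;> linarith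

theorem abs_numHACR_self_sub_le {f : ℝ → ℝ} {κ k : ℝ} (hκ : 0 ≤ f κ) (hk : 0 ≤ k) (α ΔR : ℝ) :
    |numHACR f α k ΔR κ κ κ - (ΔR - α * k) * κ| ≤ k * RR f κ α := by
  have : numHACR f α k ΔR κ κ κ - (ΔR - α * k) * κ = k * (α * κ - f κ + h0flux f κ κ α) := by
    rw [numHACR, hplus_self]; ring
  rw [this, abs_mul, abs_of_nonneg hk]
  exact mul_le_mul_of_nonneg_left (abs_sub_add_h0flux_self_le_RR hκ α) hk

theorem stmt_19_general
    (f : ℝ → ℝ)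
    (hcont : ContinuousOn f (Set.Icc 0 1))
    (hconc : ConcaveOn ℝ (Set.Icc 0 1) f)
    (L : ℝ) (hL : 0 < L)
    (hlip : ∀ x ∈ Set.Icc (0:ℝ) 1, ∀ y ∈ Set.Icc (0:ℝ) 1, |f x - f y| ≤ L * |x - y|)
    (hf0 : f 0 = 0) (hf1 : f 1 = 0)
    (k h α ΔR : ℝ) (hk : 0 < k)
    (hCFL : k * max L |α| ≤ h / 2)
    (hΔR : h ≤ ΔR ∧ ΔR ≤ 2 * h) :
    ∀ a b c κ : ℝ, a ∈ Set.Icc (0:ℝ) 1 → b ∈ Set.Icc (0:ℝ) 1 →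
      c ∈ Set.Icc (0:ℝ) 1 → κ ∈ Set.Icc (0:ℝ) 1 →
      (ΔR - α * k) * |HACR f α k ΔR a b c - κ| ≤ ΔR * |b - κ| -
        k * ((hplus f (b ⊔ κ) (c ⊔ κ) - hplus f (b ⊓ κ) (c ⊓ κ)) -
             (h0flux f (a ⊔ κ) (b ⊔ κ) α - h0flux f (a ⊓ κ) (b ⊓ κ) α)) +
        k * RR f κ α := by
  intro a b c κ ha hb hc hκ
  have hkL : k * L ≤ h / 2 := (mul_le_mul_of_nonneg_left (le_max_left _ _) hk.le).trans hCFL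
  have hkα : k * |α| ≤ h / 2 := (mul_le_mul_of_nonneg_left (le_max_right _ _) hk.le).trans hCFL
  have hD : 0 < ΔR - α * k := by nlinarith [le_abs_self α, mul_pos hk hL, hΔR.1]
  have hCFL' : k * (L + |α|) ≤ ΔR := by linarith [hΔR.1]
  set N := numHACR f α k ΔR
  have mono {a₁ b₁ c₁ a₂ b₂ c₂ : ℝ} :=
    @numHACR_mono f L α k ΔR hcont hconc hlip hL.le hf0 hk.le hCFL' a₁ b₁ c₁ a₂ b₂ c₂
  have inf_mem {x : ℝ} (hx : x ∈ Icc (0 : ℝ) 1) : x ⊓ κ ∈ Icc (0 : ℝ) 1 :=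
    ⟨le_inf hx.1 hκ.1, inf_le_left.trans hx.2⟩
  have sup_mem {x : ℝ} (hx : x ∈ Icc (0 : ℝ) 1) : x ⊔ κ ∈ Icc (0 : ℝ) 1 :=
    ⟨le_sup_of_le_left hx.1, sup_le hx.2 hκ.2⟩
  have hsandwich : |N a b c - N κ κ κ| ≤ N (a ⊔ κ) (b ⊔ κ) (c ⊔ κ) - N (a ⊓ κ) (b ⊓ κ) (c ⊓ κ) :=
    abs_sub_le_of_le_of_le
      (mono (inf_mem ha) (inf_mem hb) (inf_mem hc) ha hb hc inf_le_left inf_le_left inf_le_left)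
      (mono ha hb hc (sup_mem ha) (sup_mem hb) (sup_mem hc) le_sup_left le_sup_left le_sup_left)
      (mono (inf_mem ha) (inf_mem hb) (inf_mem hc) hκ hκ hκ inf_le_right inf_le_right inf_le_right)
      (mono hκ hκ hκ (sup_mem ha) (sup_mem hb) (sup_mem hc) le_sup_right le_sup_right le_sup_right)
  have hfκ : 0 ≤ f κ := by
    simpa [hf0, hf1] using
      hconc.min_le_of_mem_Icc (left_mem_Icc.2 zero_le_one) (right_mem_Icc.2 zero_le_one) hκ
  calc (ΔR - α * k) * |HACR f α k ΔR a b c - κ| = |N a b c - (ΔR - α * k) * κ| := by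
        rw [HACR_eq_numHACR_div, ← abs_of_pos hD, ← abs_mul, abs_of_pos hD, mul_sub,
          mul_div_cancel₀ _ hD.ne']
    _ ≤ |N a b c - N κ κ κ| + |N κ κ κ - (ΔR - α * k) * κ| := abs_sub_le _ _ _
    _ ≤ N (a ⊔ κ) (b ⊔ κ) (c ⊔ κ) - N (a ⊓ κ) (b ⊓ κ) (c ⊓ κ) + k * RR f κ α :=
        add_le_add hsandwich (abs_numHACR_self_sub_le hfκ hk.le α ΔR)
    _ = _ := by simp only [N, numHACR, ← max_sub_min_eq_abs']; ring

/-- Discrete entropy inequality for the cell to the right of the interface (Case A). -/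
theorem stmt_19
    (f : ℝ → ℝ)
    (hcont : ContinuousOn f (Set.Icc 0 1))
    (hconc : ConcaveOn ℝ (Set.Icc 0 1) f)
    (L : ℝ) (hL : 0 < L)
    (hlip : ∀ x ∈ Set.Icc (0:ℝ) 1, ∀ y ∈ Set.Icc (0:ℝ) 1, |f x - f y| ≤ L * |x - y|)
    (hf0 : f 0 = 0) (hf1 : f 1 = 0)
    (k h α ΔR : ℝ) (hk : 0 < k) (hh : 0 < h)
    (hCFL : k * max L |α| ≤ h / 2)
    (hΔR : h ≤ ΔR ∧ ΔR ≤ 2 * h) :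
    ∀ a b c κ : ℝ, a ∈ Set.Icc (0:ℝ) 1 → b ∈ Set.Icc (0:ℝ) 1 →
      c ∈ Set.Icc (0:ℝ) 1 → κ ∈ Set.Icc (0:ℝ) 1 →
      (ΔR - α * k) * |HACR f α k ΔR a b c - κ| ≤ ΔR * |b - κ| -
        k * ((hplus f (b ⊔ κ) (c ⊔ κ) - hplus f (b ⊓ κ) (c ⊓ κ)) -
             (h0flux f (a ⊔ κ) (b ⊔ κ) α - h0flux f (a ⊓ κ) (b ⊓ κ) α)) +
        k * RR f κ α :=
  stmt_19_general f hcont hconc L hL hlip hf0 hf1 k h α ΔR hk hCFL hΔR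
end
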